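/- arXiv:2304.08647 — 3 statements merged into one kernel-verified Lean document; each statement's English description precedes it below -/
import Mathlib

section
/- For every increasing measurable set S ⊆ ℝ^{T_d}, the map a ↦ ℙ(φ_a ∈ S) is non-decreasing on ℝ. -/
open MeasureTheory ProbabilityTheory Filter

noncomputable section
namespace GFFStmt

/-- Vertices of the `d`-regular tree `T_d` rooted at `∘`: the root (`none`) together with
nonempty words whose first letter lies in `Fin d` and subsequent letters in `Fin (d-1)`. -/
def Td (d : ℕ) : Type := Option (Fin d × List (Fin (d - 1)))

instance (d : ℕ) : MeasurableSpace (Td d) := ⊤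

/-- Height `|x|`: the word length. -/
def tdHeight (d : ℕ) : Td d → ℕ
  | none => 0
  | some (_, l) => l.length + 1

/-- The Gaussian free field on `T_d` given root value `a`, built recursively from the i.i.d.
standard Gaussians `ζ` indexed by the non-root vertices:
`φ_a(∘) = a` and `φ_a(y) = √(d/(d−1))·ζ_y + φ_a(ȳ)/(d−1)` for `y ≠ ∘`. -/
noncomputable def phiTd (d : ℕ) {Ω : Type*} (a : ℝ)
    (ζ : {x : Td d // x ≠ none} → Ω → ℝ) : Td d → Ω → ℝ
  | none => fun _ => a
  | some (i, []) => fun ω =>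
      Real.sqrt ((d : ℝ) / ((d : ℝ) - 1)) * ζ ⟨some (i, []), by simp [Td]⟩ ω
        + phiTd d a ζ none ω / ((d : ℝ) - 1)
  | some (i, c :: l) => fun ω =>
      Real.sqrt ((d : ℝ) / ((d : ℝ) - 1)) * ζ ⟨some (i, c :: l), by simp [Td]⟩ ω
        + phiTd d a ζ (some (i, (c :: l).dropLast)) ω / ((d : ℝ) - 1)
  termination_by x => tdHeight d x
  decreasing_by
  · simp [tdHeight]
  · simp [tdHeight, List.length_dropLast]

/-! All the fields `φ_a` are built from the same noise `ζ`, and the recursion is increasing in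
the parent's value, so `φ_a ≤ φ_b` pointwise for `a ≤ b`; hence `{φ_a ∈ S} ⊆ {φ_b ∈ S}` for an
increasing `S`. -/

theorem monotone_phiTd {d : ℕ} (hd : 1 ≤ d) {Ω : Type*} (ζ : {x : Td d // x ≠ none} → Ω → ℝ)
    (x : Td d) (ω : Ω) : Monotone fun a => phiTd d a ζ x ω := by
  intro a b hab
  have hd1 : (0 : ℝ) ≤ (d : ℝ) - 1 := by
    rw [sub_nonneg]
    exact_mod_cast hd
  match x with
  | none => simpa only [phiTd] using hab
  | some (i, []) =>
    simp only [phiTd]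
    gcongr
  | some (i, c :: l) =>
    simp only [phiTd]
    gcongr
    exact monotone_phiTd hd ζ (some (i, (c :: l).dropLast)) ω hab
  termination_by tdHeight d x
  decreasing_by simp [tdHeight, List.length_dropLast]

theorem stmt_2_general (d : ℕ) (hd : 3 ≤ d) {Ω : Type*} [MeasurableSpace Ω]
    (P : Measure Ω)
    (ζ : {x : Td d // x ≠ none} → Ω → ℝ)
    (S : Set (Td d → ℝ))
    (hIncr : ∀ u v : Td d → ℝ, u ∈ S → (∀ x, u x ≤ v x) → v ∈ S) :
    Monotone (fun a : ℝ => P {ω | (fun x => phiTd d a ζ x ω) ∈ S}) := by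
  intro a b hab
  refine measure_mono fun ω hω => hIncr _ _ hω fun x => ?_
  exact monotone_phiTd (by omega) ζ x ω hab

/-- for every increasing measurable set `S ⊆ ℝ^{T_d}`, the map
`a ↦ ℙ(φ_a ∈ S)` is non-decreasing on `ℝ`. -/
theorem stmt_2 (d : ℕ) (hd : 3 ≤ d) {Ω : Type*} [MeasurableSpace Ω]
    (P : Measure Ω) [IsProbabilityMeasure P]
    (ζ : {x : Td d // x ≠ none} → Ω → ℝ)
    (hind : iIndepFun ζ P)
    (hgauss : ∀ x, P.map (ζ x) = gaussianReal 0 1)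
    (S : Set (Td d → ℝ)) (hS : MeasurableSet S)
    (hIncr : ∀ u v : Td d → ℝ, u ∈ S → (∀ x, u x ≤ v x) → v ∈ S) :
    Monotone (fun a : ℝ => P {ω | (fun x => phiTd d a ζ x ω) ∈ S}) :=
  stmt_2_general d hd P ζ S hIncr

end GFFStmt
end
end

section
/- The operator L_h is self-adjoint and non-negative on L²(ν): for all f, g ∈ L²(ν), ⟪L_h f, g⟫ = ⟪f, L_h g⟫ and ⟪L_h f, f⟫ ≥ 0, where ⟪·,·⟫ denotes the inner product of L²(ν). -/
open MeasureTheory ProbabilityTheory Filter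

noncomputable section
namespace GFFStmt

/-- The Gaussian measure `ν = N(0, (d−1)/(d−2))` on `ℝ`. -/
noncomputable def nu (d : ℕ) : Measure ℝ :=
  gaussianReal 0 (Real.toNNReal (((d : ℝ) - 1) / ((d : ℝ) - 2)))

/-- The Gaussian measure `ν₁ = N(0, d/(d−1))` on `ℝ`. -/
noncomputable def nu1 (d : ℕ) : Measure ℝ :=
  gaussianReal 0 (Real.toNNReal ((d : ℝ) / ((d : ℝ) - 1)))

/-- The defining property of the intergenerational operator `L_h` on `L²(ν)`:
`(L_h f)(a) = (d−1)·1_{[h,∞)}(a)·∫ f(a/(d−1)+y)·1_{[h,∞)}(a/(d−1)+y) dν₁(y)` for ν-a.e. `a`. -/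
def OpProp (d : ℕ) (h : ℝ) (L : Lp ℝ 2 (nu d) →L[ℝ] Lp ℝ 2 (nu d)) : Prop :=
  ∀ f : Lp ℝ 2 (nu d),
    ∀ᵐ a ∂(nu d),
      (L f : ℝ → ℝ) a =
        ((d : ℝ) - 1) * Set.indicator (Set.Ici h) (fun _ => (1 : ℝ)) a *
          ∫ y, (f : ℝ → ℝ) (a / ((d : ℝ) - 1) + y) *
            Set.indicator (Set.Ici h) (fun _ => (1 : ℝ)) (a / ((d : ℝ) - 1) + y) ∂(nu1 d)

open scoped RealInnerProductSpace

/-!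
If `a ~ ν` and `y ~ ν₁` are independent, then `(a, b) = (a, a/(d-1) + y)` is a centred Gaussian
pair with both variances `(d-1)/(d-2)` and covariance `1/(d-2)`. Comparing characteristic
functions, it has the law of `(w + x₁, w + x₂)` with `w ~ N(0, 1/(d-2))` and `x₁, x₂ ~ N(0, 1)`
independent. Writing `F = 1_{[h,∞)} f` and `G = 1_{[h,∞)} g`, one has
`⟪L_h f, g⟫ = (d-1) E[G(a) F(b)]`; self-adjointness is the exchangeability of `(a, b)`, and
`⟪L_h f, f⟫ = (d-1) E_w[(E_x F(w + x))²] ≥ 0`.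
-/

open scoped NNReal

section CommonShift

variable {E : Type*} [MeasurableSpace E] [Add E] [MeasurableAdd₂ E]

def commonShift (μ κ : Measure E) : Measure (E × E) :=
  (μ.prod (κ.prod κ)).map fun q => (q.1 + q.2.1, q.1 + q.2.2)

instance {μ κ : Measure E} [IsProbabilityMeasure μ] [IsProbabilityMeasure κ] :
    IsProbabilityMeasure (commonShift μ κ) :=
  Measure.isProbabilityMeasure_map (by fun_prop)

variable {μ κ : Measure E} [SFinite μ] [SFinite κ]

lemma map_swap_commonShift : (commonShift μ κ).map Prod.swap = commonShift μ κ := by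
  have hT : Measurable fun q : E × E × E => (q.1 + q.2.1, q.1 + q.2.2) := by fun_prop
  calc (commonShift μ κ).map Prod.swap
      = ((μ.map id).prod ((κ.prod κ).map Prod.swap)).map
          fun q => (q.1 + q.2.1, q.1 + q.2.2) := by
        rw [commonShift, Measure.map_map measurable_swap hT,
          Measure.map_prod_map _ _ measurable_id measurable_swap, Measure.map_map hT (by fun_prop)]
        rfl
    _ = commonShift μ κ := by rw [Measure.map_id, Measure.prod_swap, commonShift]

lemma integral_mul_self_commonShift_nonneg {φ : E → ℝ}
    (hφ : Integrable (fun p => φ p.1 * φ p.2) (commonShift μ κ)) :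
    0 ≤ ∫ p, φ p.1 * φ p.2 ∂commonShift μ κ := by
  have hT : Measurable fun q : E × E × E => (q.1 + q.2.1, q.1 + q.2.2) := by fun_prop
  have hφ' : Integrable (fun q : E × E × E => φ (q.1 + q.2.1) * φ (q.1 + q.2.2))
      (μ.prod (κ.prod κ)) :=
    (integrable_map_measure hφ.aestronglyMeasurable hT.aemeasurable).mp hφ
  rw [commonShift, integral_map hT.aemeasurable hφ.aestronglyMeasurable, integral_prod _ hφ']
  refine integral_nonneg fun w => ?_
  rw [integral_prod_mul (fun x => φ (w + x)) (fun x => φ (w + x))]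
  exact mul_self_nonneg _

end CommonShift

lemma integrable_mul_of_map_fst_of_map_snd {α β : Type*} [MeasurableSpace α] [MeasurableSpace β]
    {P : Measure (α × β)} {μ : Measure α} {ν : Measure β} (hP₁ : P.map Prod.fst = μ)
    (hP₂ : P.map Prod.snd = ν) {f : α → ℝ} {g : β → ℝ} (hf : MemLp f 2 μ) (hg : MemLp g 2 ν) :
    Integrable (fun p => f p.1 * g p.2) P :=
  (hf.comp_measurePreserving ⟨measurable_fst, hP₁⟩).integrable_mul
    (hg.comp_measurePreserving ⟨measurable_snd, hP₂⟩)

lemma charFun_gaussianReal_zero (v : ℝ≥0) (t : ℝ) :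
    charFun (gaussianReal 0 v) t = Complex.exp (-(v * t ^ 2 / 2)) := by
  rw [charFun_gaussianReal]; congr 1; push_cast; ring

-- Both sides are centred Gaussian; the hypotheses say that their covariance matrices agree.
lemma map_prod_gaussianReal_shear {v w r u : ℝ≥0} {c : ℝ} (hv : (v : ℝ) = r + u)
    (hc : c * v = r) (hw : c ^ 2 * v + w = r + u) :
    ((gaussianReal 0 v).prod (gaussianReal 0 w)).map (fun p => (p.1, c * p.1 + p.2))
      = commonShift (gaussianReal 0 r) (gaussianReal 0 u) := by
  have hS : Measurable fun p : ℝ × ℝ => (p.1, c * p.1 + p.2) := by fun_prop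
  have hT : Measurable fun q : ℝ × ℝ × ℝ => (q.1 + q.2.1, q.1 + q.2.2) := by fun_prop
  refine Measure.ext_of_charFunDual (funext fun L => ?_)
  have hL : ∀ x y : ℝ, L (x, y) = x * L (1, 0) + y * L (0, 1) := fun x y => by
    have hxy : ((x, y) : ℝ × ℝ) = x • (1, 0) + y • (0, 1) := by ext <;> simp
    rw [hxy, map_add, map_smul, map_smul, smul_eq_mul, smul_eq_mul]
  set l₁ := L (1, 0)
  set l₂ := L (0, 1)
  have hS_exp : ∀ p : ℝ × ℝ, Complex.exp (↑(p.1 * l₁ + (c * p.1 + p.2) * l₂) * Complex.I)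
      = Complex.exp (↑(l₁ + c * l₂) * ↑p.1 * Complex.I) * Complex.exp (↑l₂ * ↑p.2 * Complex.I) :=
    fun p => by rw [← Complex.exp_add]; push_cast; ring_nf
  have hT_exp : ∀ q : ℝ × ℝ × ℝ,
      Complex.exp (↑((q.1 + q.2.1) * l₁ + (q.1 + q.2.2) * l₂) * Complex.I)
        = Complex.exp (↑(l₁ + l₂) * ↑q.1 * Complex.I) * (Complex.exp (↑l₁ * ↑q.2.1 * Complex.I)
          * Complex.exp (↑l₂ * ↑q.2.2 * Complex.I)) :=
    fun q => by rw [← Complex.exp_add, ← Complex.exp_add]; push_cast; ring_nf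
  rw [charFunDual_apply, charFunDual_apply, commonShift,
    integral_map hS.aemeasurable (by fun_prop), integral_map hT.aemeasurable (by fun_prop)]
  simp only [hL, hS_exp, hT_exp]
  rw [integral_prod_mul (fun a : ℝ => Complex.exp (↑(l₁ + c * l₂) * ↑a * Complex.I))
      (fun y : ℝ => Complex.exp (↑l₂ * ↑y * Complex.I)),
    integral_prod_mul (fun z : ℝ => Complex.exp (↑(l₁ + l₂) * ↑z * Complex.I))
      (fun x : ℝ × ℝ => Complex.exp (↑l₁ * ↑x.1 * Complex.I) * Complex.exp (↑l₂ * ↑x.2 * Complex.I)),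
    integral_prod_mul (fun x : ℝ => Complex.exp (↑l₁ * ↑x * Complex.I))
      (fun x : ℝ => Complex.exp (↑l₂ * ↑x * Complex.I))]
  simp only [← charFun_apply_real, charFun_gaussianReal_zero, ← Complex.exp_add]
  congr 1
  push_cast
  have hv' := congrArg Complex.ofReal hv
  have hc' := congrArg Complex.ofReal hc
  have hw' := congrArg Complex.ofReal hw
  push_cast at hv' hc' hw'
  linear_combination (-(l₁ : ℂ) ^ 2 / 2) * hv' - (l₁ : ℂ) * l₂ * hc' - (l₂ : ℂ) ^ 2 / 2 * hw'

instance (d : ℕ) : IsProbabilityMeasure (nu d) := by unfold nu; infer_instance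

instance (d : ℕ) : IsProbabilityMeasure (nu1 d) := by unfold nu1; infer_instance

def jointLaw (d : ℕ) : Measure (ℝ × ℝ) :=
  ((nu d).prod (nu1 d)).map fun p => (p.1, p.1 / ((d : ℝ) - 1) + p.2)

section JointLaw

variable {d : ℕ}

lemma jointLaw_eq_commonShift (hd : 3 ≤ d) :
    jointLaw d = commonShift (gaussianReal 0 (Real.toNNReal ((d : ℝ) - 2)⁻¹)) (gaussianReal 0 1) := by
  have h2 : (0 : ℝ) < d - 2 := by
    have : (3 : ℝ) ≤ d := by exact_mod_cast hd
    linarith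
  have h1 : (0 : ℝ) < d - 1 := by linarith
  have hr : ((Real.toNNReal ((d : ℝ) - 2)⁻¹ : ℝ≥0) : ℝ) = ((d : ℝ) - 2)⁻¹ :=
    Real.coe_toNNReal _ (inv_nonneg.mpr h2.le)
  have hv : ((Real.toNNReal (((d : ℝ) - 1) / ((d : ℝ) - 2)) : ℝ≥0) : ℝ) = ((d : ℝ) - 1) / (d - 2) :=
    Real.coe_toNNReal _ (div_nonneg h1.le h2.le)
  have hw : ((Real.toNNReal ((d : ℝ) / ((d : ℝ) - 1)) : ℝ≥0) : ℝ) = (d : ℝ) / (d - 1) :=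
    Real.coe_toNNReal _ (div_nonneg (by linarith) h1.le)
  have hshear : (fun p : ℝ × ℝ => (p.1, p.1 / ((d : ℝ) - 1) + p.2))
      = fun p => (p.1, ((d : ℝ) - 1)⁻¹ * p.1 + p.2) := by
    simp only [div_eq_inv_mul]
  rw [jointLaw, hshear, nu, nu1]
  refine map_prod_gaussianReal_shear ?_ ?_ ?_ <;>
    simp only [hr, hv, hw, NNReal.coe_one] <;> field_simp <;> ring

lemma map_swap_jointLaw (hd : 3 ≤ d) : (jointLaw d).map Prod.swap = jointLaw d := by
  rw [jointLaw_eq_commonShift hd, map_swap_commonShift]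

lemma map_fst_jointLaw : (jointLaw d).map Prod.fst = nu d := by
  rw [jointLaw, Measure.map_map measurable_fst (by fun_prop)]
  exact measurePreserving_fst.map_eq

lemma map_snd_jointLaw (hd : 3 ≤ d) : (jointLaw d).map Prod.snd = nu d := by
  rw [← map_swap_jointLaw hd, Measure.map_map measurable_snd measurable_swap]
  exact map_fst_jointLaw

lemma integrable_mul_jointLaw (hd : 3 ≤ d) {f g : ℝ → ℝ} (hf : MemLp f 2 (nu d))
    (hg : MemLp g 2 (nu d)) : Integrable (fun p => f p.1 * g p.2) (jointLaw d) :=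
  integrable_mul_of_map_fst_of_map_snd map_fst_jointLaw (map_snd_jointLaw hd) hf hg

lemma integral_mul_jointLaw_comm (hd : 3 ≤ d) (f g : ℝ → ℝ) :
    ∫ p, f p.1 * g p.2 ∂jointLaw d = ∫ p, g p.1 * f p.2 ∂jointLaw d := by
  conv_lhs => rw [← map_swap_jointLaw hd]
  exact (integral_map_equiv MeasurableEquiv.prodComm _).trans
    (integral_congr_ae (ae_of_all _ fun p => mul_comm _ _))

lemma integral_mul_self_jointLaw_nonneg (hd : 3 ≤ d) {f : ℝ → ℝ} (hf : MemLp f 2 (nu d)) :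
    0 ≤ ∫ p, f p.1 * f p.2 ∂jointLaw d := by
  have hI := integrable_mul_jointLaw hd hf hf
  rw [jointLaw_eq_commonShift hd] at hI ⊢
  exact integral_mul_self_commonShift_nonneg hI

lemma integral_mul_jointLaw (hd : 3 ≤ d) {f g : ℝ → ℝ} (hf : MemLp f 2 (nu d))
    (hg : MemLp g 2 (nu d)) :
    ∫ p, f p.1 * g p.2 ∂jointLaw d = ∫ a, f a * ∫ y, g (a / ((d : ℝ) - 1) + y) ∂nu1 d ∂nu d := by
  have hS : Measurable fun p : ℝ × ℝ => (p.1, p.1 / ((d : ℝ) - 1) + p.2) := by fun_prop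
  have hI := integrable_mul_jointLaw hd hf hg
  have hI' : Integrable (fun q : ℝ × ℝ => f q.1 * g (q.1 / ((d : ℝ) - 1) + q.2))
      ((nu d).prod (nu1 d)) :=
    (integrable_map_measure hI.aestronglyMeasurable hS.aemeasurable).mp hI
  rw [jointLaw, integral_map hS.aemeasurable hI.aestronglyMeasurable, integral_prod _ hI']
  simp only [integral_const_mul]

end JointLaw

lemma inner_eq_integral_jointLaw {d : ℕ} (hd : 3 ≤ d) {h : ℝ}
    {L : Lp ℝ 2 (nu d) →L[ℝ] Lp ℝ 2 (nu d)} (hL : OpProp d h L) (f g : Lp ℝ 2 (nu d)) :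
    ⟪L f, g⟫ = ((d : ℝ) - 1) *
      ∫ p, (Set.Ici h).indicator g p.1 * (Set.Ici h).indicator f p.2 ∂jointLaw d := by
  have hF := (Lp.memLp f).indicator (measurableSet_Ici (a := h))
  have hG := (Lp.memLp g).indicator (measurableSet_Ici (a := h))
  rw [integral_mul_jointLaw hd hG hF, ← integral_const_mul, L2.inner_def]
  refine integral_congr_ae ((hL f).mono fun a ha => ?_)
  have hind : ∀ (φ : ℝ → ℝ) x,
      φ x * (Set.Ici h).indicator (fun _ => (1 : ℝ)) x = (Set.Ici h).indicator φ x :=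
    fun φ x => by simp [Set.indicator_apply]
  simp only [RCLike.inner_apply, conj_trivial, ha, hind]
  rw [← hind g a]
  ring

/-- `L_h` is self-adjoint and non-negative on `L²(ν)`:
`⟪L_h f, g⟫ = ⟪f, L_h g⟫` and `⟪L_h f, f⟫ ≥ 0` for all `f, g ∈ L²(ν)`. -/
theorem stmt_4 (d : ℕ) (hd : 3 ≤ d) (h : ℝ)
    (L : Lp ℝ 2 (nu d) →L[ℝ] Lp ℝ 2 (nu d)) (hL : OpProp d h L) :
    ∀ f g : Lp ℝ 2 (nu d), ⟪L f, g⟫ = ⟪f, L g⟫ ∧ 0 ≤ ⟪L f, f⟫ := by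
  intro f g
  refine ⟨?_, ?_⟩
  · rw [real_inner_comm (L g), inner_eq_integral_jointLaw hd hL, inner_eq_integral_jointLaw hd hL,
      integral_mul_jointLaw_comm hd]
  · have hd₁ : (0 : ℝ) ≤ d - 1 := sub_nonneg.mpr (by exact_mod_cast (by omega : 1 ≤ d))
    rw [inner_eq_integral_jointLaw hd hL]
    exact mul_nonneg hd₁
      (integral_mul_self_jointLaw_nonneg hd ((Lp.memLp f).indicator measurableSet_Ici))

end GFFStmt
end
end

section
/- Let k, k₀ ≥ 1 be integers and C > 0 a real number with C·k·k₀ ≥ 1. Let u be an integer with 1 ≤ u ≤ C·k and let 1 ≤ i₁ < i₂ < … < i_u ≤ k−1 be integers. Then there exists a pairwise disjoint family of at least k·(1 − 2·C·k₀)/k₀ sets, each consisting of k₀ consecutive integers, each contained in {1, …, k}, and each disjoint from {i₁, …, i_u}. -/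
/-!
Tile `{1, …, k}` from the left by the `⌊k / k₀⌋` blocks `{t k₀ + 1, …, t k₀ + k₀}`. Each point
to be avoided lies in at most one block, so at least `⌊k / k₀⌋ - u` blocks survive; the rounding
loses less than one block, and that block is paid for by `1 ≤ u ≤ C k`, whence the factor `2`.
-/

namespace GFFStmt

open Finset

def block (k₀ t : ℕ) : Finset ℕ := Ioc (t * k₀) (t * k₀ + k₀)

theorem mem_block_iff {k₀ t x : ℕ} (hk₀ : 0 < k₀) :
    x ∈ block k₀ t ↔ 0 < x ∧ (x - 1) / k₀ = t := by
  rw [block, mem_Ioc, Nat.div_eq_iff hk₀]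
  constructor <;> rintro ⟨h₁, h₂⟩ <;> constructor <;> omega

theorem disjoint_block {k₀ s t : ℕ} (hk₀ : 0 < k₀) (hst : s ≠ t) :
    Disjoint (block k₀ s) (block k₀ t) := by
  rw [disjoint_left]
  intro x hs ht
  exact hst (((mem_block_iff hk₀).1 hs).2.symm.trans ((mem_block_iff hk₀).1 ht).2)

theorem block_injective {k₀ : ℕ} (hk₀ : 0 < k₀) : Function.Injective (block k₀) := by
  intro s t hst
  by_contra hne
  have hmem : s * k₀ + 1 ∈ block k₀ s := by rw [block, mem_Ioc]; omega
  exact disjoint_left.1 (disjoint_block hk₀ hne) hmem (hst ▸ hmem)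

theorem block_subset_Icc {k₀ k t : ℕ} (ht : t < k / k₀) : block k₀ t ⊆ Icc 1 k := by
  intro x hx
  rw [block, mem_Ioc] at hx
  have : (t + 1) * k₀ ≤ k := (Nat.mul_le_mul_right k₀ ht).trans (Nat.div_mul_le_self k k₀)
  rw [mem_Icc]
  constructor <;> nlinarith

theorem exists_disjoint_blocks_avoiding (k : ℕ) {k₀ : ℕ} (hk₀ : 0 < k₀) (P : Finset ℕ) :
    ∃ F : Finset (Finset ℕ), k / k₀ - #P ≤ #F ∧
      (∀ A ∈ F, ∃ m : ℕ, A = Ioc m (m + k₀)) ∧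
      (∀ A ∈ F, A ⊆ Icc 1 k) ∧
      (∀ A ∈ F, Disjoint A P) ∧
      (∀ A ∈ F, ∀ B ∈ F, A ≠ B → Disjoint A B) := by
  set hit := P.image fun x => (x - 1) / k₀
  set S := range (k / k₀) \ hit
  have hhit : #hit ≤ #P := card_image_le
  have hS : k / k₀ - #P ≤ #S := calc
    k / k₀ - #P ≤ #(range (k / k₀)) - #hit := by rw [card_range]; omega
    _ ≤ #S := le_card_sdiff _ _
  refine ⟨S.image (block k₀), ?_, ?_, ?_, ?_, ?_⟩
  · rwa [card_image_of_injective _ (block_injective hk₀)]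
  · simp only [mem_image]
    rintro _ ⟨t, -, rfl⟩
    exact ⟨t * k₀, rfl⟩
  · simp only [mem_image]
    rintro _ ⟨t, ht, rfl⟩
    exact block_subset_Icc (mem_range.1 (mem_sdiff.1 ht).1)
  · simp only [mem_image]
    rintro _ ⟨t, ht, rfl⟩
    refine disjoint_left.2 fun x hx hxP => (mem_sdiff.1 ht).2 ?_
    exact mem_image.2 ⟨x, hxP, ((mem_block_iff hk₀).1 hx).2⟩
  · simp only [mem_image]
    rintro _ ⟨s, -, rfl⟩ _ ⟨t, -, rfl⟩ hne
    exact disjoint_block hk₀ fun h => hne (h ▸ rfl)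

theorem le_cast_div_sub {k k₀ u : ℕ} {C : ℝ} (hk₀ : 0 < k₀) (hu : 1 ≤ u)
    (huC : (u : ℝ) ≤ C * k) :
    (k : ℝ) * (1 - 2 * C * k₀) / k₀ ≤ ((k / k₀ - u : ℕ) : ℝ) := by
  have hk₀' : (0 : ℝ) < k₀ := by exact_mod_cast hk₀
  have hfloor : (k : ℝ) < (k / k₀ + 1 : ℕ) * k₀ := by
    exact_mod_cast Nat.lt_mul_of_div_lt (Nat.lt_succ_self _) hk₀
  have hsub : (k / k₀ : ℕ) - (u : ℝ) ≤ ((k / k₀ - u : ℕ) : ℝ) := by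
    rcases le_total u (k / k₀) with h | h
    · rw [Nat.cast_sub h]
    · rw [Nat.sub_eq_zero_of_le h]; push_cast; linarith [(Nat.cast_le (α := ℝ)).2 h]
  have hu' : (1 : ℝ) ≤ u := by exact_mod_cast hu
  rw [div_le_iff₀ hk₀']
  push_cast at hfloor
  nlinarith

theorem stmt_15_general (k k₀ : ℕ) (hk₀ : 1 ≤ k₀) (C : ℝ)
    (u : ℕ) (hu : 1 ≤ u) (huC : (u : ℝ) ≤ C * k)
    (i : Fin u → ℕ) :
    ∃ F : Finset (Finset ℕ),
      (k : ℝ) * (1 - 2 * C * k₀) / k₀ ≤ F.card ∧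
      (∀ A ∈ F, ∃ m : ℕ, A = Finset.Ioc m (m + k₀)) ∧
      (∀ A ∈ F, A ⊆ Finset.Icc 1 k) ∧
      (∀ A ∈ F, ∀ j, i j ∉ A) ∧
      (∀ A ∈ F, ∀ B ∈ F, A ≠ B → Disjoint A B) := by
  obtain ⟨F, hcard, hblock, hsub, havoid, hdisj⟩ :=
    exists_disjoint_blocks_avoiding k hk₀ (univ.image i)
  have hP : #(univ.image i) ≤ u := card_image_le.trans (by simp)
  refine ⟨F, ?_, hblock, hsub, fun A hA j hj => ?_, hdisj⟩
  · calc (k : ℝ) * (1 - 2 * C * k₀) / k₀ ≤ ((k / k₀ - u : ℕ) : ℝ) := le_cast_div_sub hk₀ hu huC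
      _ ≤ #F := by exact_mod_cast (Nat.sub_le_sub_left hP _).trans hcard
  · exact disjoint_left.1 (havoid A hA) hj (mem_image_of_mem i (mem_univ j))

/-- if `k, k₀ ≥ 1` are integers, `C > 0` with `C·k·k₀ ≥ 1`, `1 ≤ u ≤ C·k`,
and `1 ≤ i₁ < … < i_u ≤ k−1`, then there is a pairwise disjoint family of at least
`k·(1 − 2·C·k₀)/k₀` sets, each consisting of `k₀` consecutive integers (a set
`{m+1, …, m+k₀}`), each contained in `{1, …, k}`, and each disjoint from `{i₁, …, i_u}`. -/
theorem stmt_15 (k k₀ : ℕ) (hk : 1 ≤ k) (hk₀ : 1 ≤ k₀) (C : ℝ) (hC : 0 < C)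
    (hCkk : 1 ≤ C * k * k₀) (u : ℕ) (hu : 1 ≤ u) (huC : (u : ℝ) ≤ C * k)
    (i : Fin u → ℕ) (hmono : StrictMono i)
    (hlb : ∀ j, 1 ≤ i j) (hub : ∀ j, i j ≤ k - 1) :
    ∃ F : Finset (Finset ℕ),
      (k : ℝ) * (1 - 2 * C * k₀) / k₀ ≤ F.card ∧
      (∀ A ∈ F, ∃ m : ℕ, A = Finset.Ioc m (m + k₀)) ∧
      (∀ A ∈ F, A ⊆ Finset.Icc 1 k) ∧
      (∀ A ∈ F, ∀ j, i j ∉ A) ∧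
      (∀ A ∈ F, ∀ B ∈ F, A ≠ B → Disjoint A B) :=
  stmt_15_general k k₀ hk₀ C u hu huC i

end GFFStmt
end
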